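/- Let q be a complex number with 0 < |q| < 1, let m ≥ 0 be an integer, and let a be a nonzero complex number with |1/(a·q^m)| < 1. Then ∑_{n=0}^{∞} n·((a;q)_n/(q;q)_n)·(1/(a·q^m))^n = (−1)^{m+1}·q^{−m(m+1)/2}·(q;q)_m·(q;q)_∞/(1/(a·q^m);q)_∞. -/

import Mathlib

/-- The finite q-Pochhammer symbol `(a;q)_n = ∏_{k=0}^{n-1} (1 - a q^k)`. -/
noncomputable def qPoch (a q : ℂ) (n : ℕ) : ℂ := ∏ k ∈ Finset.range n, (1 - a * q ^ k)

/-- The infinite q-Pochhammer symbol `(a;q)_∞ = ∏_{k=0}^{∞} (1 - a q^k)`. -/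
noncomputable def qPochInf (a q : ℂ) : ℂ := ∏' k : ℕ, (1 - a * q ^ k)

/-!
Write `T(z) = ∑ cₙ zⁿ` and `S(z) = ∑ n cₙ zⁿ = z T'(z)` with `cₙ = (a;q)ₙ/(q;q)ₙ`. The recursion
`cₙ₊₁ (1 - qⁿ⁺¹) = cₙ (1 - a qⁿ)` gives `(1 - z) T(z) = (1 - a z) T(q z)` and its `z d/dz` version
`(1 - z) S(z) - z T(z) = (1 - a z) S(q z) - a z T(q z)`. Iterating the first one and letting
`qᴺ z → 0` yields the q-binomial theorem `(z;q)_∞ T(z) = (a z;q)_∞`, so `T` vanishes on the ladder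
`z₀ qʲ`, `j ≤ m`, where `z₀ = 1/(a qᵐ)`. There the second equation loses its `T` terms, so
`(z₀;q)ₘ S(z₀) = (a z₀;q)ₘ S(z₀ qᵐ)`, and at the top rung `a z₀ qᵐ = 1` leaves
`(1 - z₀ qᵐ) S(z₀ qᵐ) = -T(z₀ qᵐ⁺¹) = -(q;q)_∞ / (z₀ qᵐ⁺¹;q)_∞`. Finally
`(q⁻ᵐ;q)ₘ = (-1)ᵐ q^(-m(m+1)/2) (q;q)ₘ`.
-/

open Finset Filter Topology

section Pochhammer

variable {q : ℂ}

lemma qPoch_succ (a q : ℂ) (n : ℕ) : qPoch a q (n + 1) = qPoch a q n * (1 - a * q ^ n) :=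
  prod_range_succ _ _

lemma norm_mul_pow_lt_one {x : ℂ} (hq : ‖q‖ ≤ 1) (hx : ‖x‖ < 1) (k : ℕ) :
    ‖x * q ^ k‖ < 1 := by
  rw [norm_mul, norm_pow]
  exact (mul_le_of_le_one_right (norm_nonneg x) (pow_le_one₀ (norm_nonneg q) hq)).trans_lt hx

lemma one_sub_mul_pow_ne_zero {x : ℂ} (hq : ‖q‖ ≤ 1) (hx : ‖x‖ < 1) (k : ℕ) :
    1 - x * q ^ k ≠ 0 :=
  sub_ne_zero.2 fun h => (norm_mul_pow_lt_one hq hx k).ne (by rw [← h, norm_one])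

lemma summable_norm_mul_pow (hq : ‖q‖ < 1) (x : ℂ) :
    Summable fun k : ℕ => ‖x * q ^ k‖ := by
  simpa using (summable_geometric_of_lt_one (norm_nonneg q) hq).mul_left ‖x‖

lemma multipliable_one_sub_mul_pow (hq : ‖q‖ < 1) (x : ℂ) :
    Multipliable fun k : ℕ => 1 - x * q ^ k := by
  simpa [sub_eq_add_neg] using
    multipliable_one_add_of_summable (f := fun k : ℕ => -(x * q ^ k))
      (by simpa using summable_norm_mul_pow hq x)

lemma tendsto_qPoch (hq : ‖q‖ < 1) (x : ℂ) :
    Tendsto (qPoch x q) atTop (𝓝 (qPochInf x q)) :=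
  (multipliable_one_sub_mul_pow hq x).hasProd.tendsto_prod_nat

lemma qPochInf_ne_zero {x : ℂ} (hq : ‖q‖ < 1) (hx : ‖x‖ < 1) : qPochInf x q ≠ 0 := by
  simpa [qPochInf, sub_eq_add_neg] using
    tprod_one_add_ne_zero_of_summable (f := fun k : ℕ => -(x * q ^ k))
      (by simpa [← sub_eq_add_neg] using one_sub_mul_pow_ne_zero hq.le hx)
      (by simpa using summable_norm_mul_pow hq x)

lemma qPochInf_eq_zero_of_mul_pow_eq_one {x : ℂ} {k : ℕ} (h : x * q ^ k = 1) :
    qPochInf x q = 0 :=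
  tprod_of_exists_eq_zero ⟨k, by simp [h]⟩

lemma qPochInf_eq_qPoch_mul (hq : ‖q‖ < 1) (x : ℂ) (N : ℕ) :
    qPochInf x q = qPoch x q N * qPochInf (x * q ^ N) q := by
  have hshift : (fun i => 1 - x * q ^ (i + N)) = fun i => 1 - x * q ^ N * q ^ i := by
    ext i; ring
  have h := Multipliable.prod_mul_tprod_nat_mul' (f := fun i => 1 - x * q ^ i) (k := N)
    (hshift ▸ multipliable_one_sub_mul_pow hq (x * q ^ N))
  rw [hshift] at h
  exact h.symm

lemma qPoch_inv_pow_self (hq : q ≠ 0) (m : ℕ) :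
    qPoch (q ^ m)⁻¹ q m = (-1) ^ m * (q ^ (m * (m + 1) / 2))⁻¹ * qPoch q q m := by
  induction m with
  | zero => simp [qPoch]
  | succ m ih =>
    have hpeel : qPoch (q ^ (m + 1))⁻¹ q (m + 1) =
        qPoch (q ^ m)⁻¹ q m * (1 - (q ^ (m + 1))⁻¹) := by
      rw [qPoch, prod_range_succ', qPoch]
      congr 1
      · refine prod_congr rfl fun k _ => ?_
        field_simp
        ring
      · simp
    have htri : (m + 1) * (m + 1 + 1) / 2 = m * (m + 1) / 2 + (m + 1) := by
      rw [show (m + 1) * (m + 1 + 1) = m * (m + 1) + 2 * (m + 1) by ring,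
        Nat.add_mul_div_left _ _ two_pos]
    rw [hpeel, ih, qPoch_succ, htri, pow_add]
    field_simp
    ring

end Pochhammer

noncomputable def qBinomCoeff (a q : ℂ) (n : ℕ) : ℂ := qPoch a q n / qPoch q q n

noncomputable def qBinomSeries (a q z : ℂ) : ℂ := ∑' n, qBinomCoeff a q n * z ^ n

noncomputable def qBinomEulerSeries (a q z : ℂ) : ℂ :=
  ∑' n : ℕ, n * qBinomCoeff a q n * z ^ n

section Series

variable {a q : ℂ}

@[simp]
lemma qBinomCoeff_zero : qBinomCoeff a q 0 = 1 := by simp [qBinomCoeff, qPoch]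

lemma qBinomCoeff_succ_mul (hq : ‖q‖ < 1) (n : ℕ) :
    qBinomCoeff a q (n + 1) * (1 - q * q ^ n) = qBinomCoeff a q n * (1 - a * q ^ n) := by
  rw [qBinomCoeff, qBinomCoeff, qPoch_succ, qPoch_succ, div_mul_eq_mul_div,
    mul_div_mul_right _ _ (one_sub_mul_pow_ne_zero hq.le hq n)]
  ring

lemma exists_norm_qBinomCoeff_le (hq : ‖q‖ < 1) : ∃ M, ∀ n, ‖qBinomCoeff a q n‖ ≤ M := by
  have hlim : Tendsto (qBinomCoeff a q) atTop (𝓝 (qPochInf a q / qPochInf q q)) :=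
    (tendsto_qPoch hq a).div (tendsto_qPoch hq q) (qPochInf_ne_zero hq hq)
  obtain ⟨M, hM⟩ := isBounded_iff_forall_norm_le.1 (Metric.isBounded_range_of_tendsto _ hlim)
  exact ⟨M, fun n => hM _ ⟨n, rfl⟩⟩

lemma summable_qBinomSeries (hq : ‖q‖ < 1) {z : ℂ} (hz : ‖z‖ < 1) :
    Summable fun n => qBinomCoeff a q n * z ^ n := by
  obtain ⟨M, hM⟩ := exists_norm_qBinomCoeff_le (a := a) hq
  refine .of_norm_bounded ((summable_geometric_of_lt_one (norm_nonneg z) hz).mul_left M)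
    fun n => ?_
  rw [norm_mul, norm_pow]
  exact mul_le_mul_of_nonneg_right (hM n) (by positivity)

lemma summable_qBinomEulerSeries (hq : ‖q‖ < 1) {z : ℂ} (hz : ‖z‖ < 1) :
    Summable fun n : ℕ => n * qBinomCoeff a q n * z ^ n := by
  obtain ⟨M, hM⟩ := exists_norm_qBinomCoeff_le (a := a) hq
  have hg : Summable fun n : ℕ => M * ((n : ℝ) ^ 1 * ‖z‖ ^ n) :=
    (summable_pow_mul_geometric_of_norm_lt_one 1 (by simpa using hz)).mul_left M
  refine .of_norm_bounded hg fun n => ?_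
  calc ‖(n : ℂ) * qBinomCoeff a q n * z ^ n‖
        = ‖qBinomCoeff a q n‖ * ((n : ℝ) ^ 1 * ‖z‖ ^ n) := by
        rw [norm_mul, norm_mul, norm_pow, Complex.norm_natCast]; ring
    _ ≤ M * ((n : ℝ) ^ 1 * ‖z‖ ^ n) := by gcongr; exact hM n

lemma tendsto_qBinomSeries_nhds_zero (hq : ‖q‖ < 1) :
    Tendsto (qBinomSeries a q) (𝓝 0) (𝓝 1) := by
  obtain ⟨M, hM⟩ := exists_norm_qBinomCoeff_le (a := a) hq
  show Tendsto (fun z => ∑' n, qBinomCoeff a q n * z ^ n) _ _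
  have h := tendsto_tsum_of_dominated_convergence (𝓕 := 𝓝 (0 : ℂ))
    (f := fun z n => qBinomCoeff a q n * z ^ n) (g := fun n => qBinomCoeff a q n * 0 ^ n)
    ((summable_geometric_of_lt_one (by norm_num) (by norm_num : (1 / 2 : ℝ) < 1)).mul_left M)
    (fun n => ((continuous_pow n).tendsto 0).const_mul _) ?_
  · simpa [zero_pow_eq] using h
  filter_upwards [Metric.ball_mem_nhds (0 : ℂ) (by norm_num : (0 : ℝ) < 1 / 2)] with z hz n
  rw [mem_ball_zero_iff] at hz
  rw [norm_mul, norm_pow]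
  exact mul_le_mul (hM n) (pow_le_pow_left₀ (norm_nonneg z) hz.le n) (by positivity)
    ((norm_nonneg _).trans (hM n))

end Series

section ShiftedSums

variable {R : Type*} [Ring R] [TopologicalSpace R] [IsTopologicalRing R] [T2Space R]

lemma one_sub_mul_tsum {f : ℕ → R} (hf : Summable f) (s : R) :
    (1 - s) * ∑' n, f n = f 0 + ∑' n, (f (n + 1) - s * f n) := by
  rw [((summable_nat_add_iff 1).2 hf).tsum_sub (hf.mul_left s), hf.tsum_mul_left,
    hf.tsum_eq_zero_add]
  noncomm_ring

lemma one_sub_mul_tsum_sub_mul_tsum {F u : ℕ → R} (hF : Summable F) (hu : Summable u) (s : R) :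
    (1 - s) * ∑' n, F n - s * ∑' n, u n = F 0 + ∑' n, (F (n + 1) - s * F n - s * u n) := by
  have hF' := (summable_nat_add_iff 1).2 hF
  rw [(hF'.sub (hF.mul_left s)).tsum_sub (hu.mul_left s), hF'.tsum_sub (hF.mul_left s),
    hF.tsum_mul_left, hu.tsum_mul_left, hF.tsum_eq_zero_add]
  noncomm_ring

end ShiftedSums

section FunctionalEquations

variable {a q z : ℂ}

lemma norm_mul_lt_one (hq : ‖q‖ < 1) (hz : ‖z‖ < 1) : ‖z * q‖ < 1 := by
  simpa using norm_mul_pow_lt_one hq.le hz 1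

lemma one_sub_mul_qBinomSeries (hq : ‖q‖ < 1) (hz : ‖z‖ < 1) :
    (1 - z) * qBinomSeries a q z = (1 - a * z) * qBinomSeries a q (z * q) := by
  rw [qBinomSeries, qBinomSeries, one_sub_mul_tsum (summable_qBinomSeries hq hz),
    one_sub_mul_tsum (summable_qBinomSeries hq (norm_mul_lt_one hq hz))]
  simp only [qBinomCoeff_zero, pow_zero, mul_one]
  congr 1
  exact tsum_congr fun n => by linear_combination z ^ (n + 1) * qBinomCoeff_succ_mul hq n

lemma one_sub_mul_qBinomEulerSeries (hq : ‖q‖ < 1) (hz : ‖z‖ < 1) :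
    (1 - z) * qBinomEulerSeries a q z - z * qBinomSeries a q z =
      (1 - a * z) * qBinomEulerSeries a q (z * q) - a * z * qBinomSeries a q (z * q) := by
  have hzq := norm_mul_lt_one hq hz
  rw [qBinomEulerSeries, qBinomEulerSeries, qBinomSeries, qBinomSeries,
    one_sub_mul_tsum_sub_mul_tsum (summable_qBinomEulerSeries hq hz)
      (summable_qBinomSeries hq hz),
    one_sub_mul_tsum_sub_mul_tsum (summable_qBinomEulerSeries hq hzq)
      (summable_qBinomSeries hq hzq)]
  simp only [Nat.cast_zero, zero_mul]
  congr 1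
  refine tsum_congr fun n => ?_
  push_cast
  linear_combination ((n : ℂ) + 1) * z ^ (n + 1) * qBinomCoeff_succ_mul hq n

end FunctionalEquations

lemma qPoch_mul_eq_qPoch_mul_of_forall_lt {F : ℂ → ℂ} {a q z : ℂ} {N : ℕ}
    (hF : ∀ j < N, (1 - z * q ^ j) * F (z * q ^ j) = (1 - a * (z * q ^ j)) * F (z * q ^ j * q)) :
    qPoch z q N * F z = qPoch (a * z) q N * F (z * q ^ N) := by
  induction N with
  | zero => simp [qPoch]
  | succ N ih =>
    rw [qPoch_succ, qPoch_succ, pow_succ, ← mul_assoc]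
    linear_combination (1 - z * q ^ N) * ih (fun j hj => hF j (by omega)) +
      qPoch (a * z) q N * hF N (by omega)

section QBinomial

variable {a q z : ℂ}

theorem qPochInf_mul_qBinomSeries (hq : ‖q‖ < 1) (hz : ‖z‖ < 1) :
    qPochInf z q * qBinomSeries a q z = qPochInf (a * z) q := by
  have hiter (N : ℕ) : qPoch z q N * qBinomSeries a q z =
      qPoch (a * z) q N * qBinomSeries a q (z * q ^ N) :=
    qPoch_mul_eq_qPoch_mul_of_forall_lt fun j _ =>
      one_sub_mul_qBinomSeries hq (norm_mul_pow_lt_one hq.le hz j)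
  have hlim : Tendsto (fun N => qBinomSeries a q (z * q ^ N)) atTop (𝓝 1) := by
    refine (tendsto_qBinomSeries_nhds_zero hq).comp ?_
    simpa using (tendsto_pow_atTop_nhds_zero_of_norm_lt_one hq).const_mul z
  refine tendsto_nhds_unique (((tendsto_qPoch hq z).mul_const _).congr hiter) ?_
  simpa using (tendsto_qPoch hq (a * z)).mul hlim

lemma qBinomSeries_eq_zero (hq : ‖q‖ < 1) (hz : ‖z‖ < 1) {k : ℕ} (h : a * z * q ^ k = 1) :
    qBinomSeries a q z = 0 := by
  have h0 := qPochInf_mul_qBinomSeries (a := a) hq hz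
  rw [qPochInf_eq_zero_of_mul_pow_eq_one h] at h0
  exact (mul_eq_zero.1 h0).resolve_left (qPochInf_ne_zero hq hz)

end QBinomial

theorem qPochInf_mul_qBinomEulerSeries {a q z : ℂ} (hq : ‖q‖ < 1) (hz : ‖z‖ < 1) {m : ℕ}
    (h : a * z * q ^ m = 1) :
    qPochInf z q * qBinomEulerSeries a q z = -(qPoch (a * z) q m * qPochInf q q) := by
  have hzj (j : ℕ) : ‖z * q ^ j‖ < 1 := norm_mul_pow_lt_one hq.le hz j
  have hT (j : ℕ) (hj : j ≤ m) : qBinomSeries a q (z * q ^ j) = 0 :=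
    qBinomSeries_eq_zero hq (hzj j) (k := m - j) <|
      calc a * (z * q ^ j) * q ^ (m - j) = a * z * q ^ (j + (m - j)) := by ring
        _ = 1 := by rw [Nat.add_sub_cancel' hj, h]
  have hladder : qPoch z q m * qBinomEulerSeries a q z =
      qPoch (a * z) q m * qBinomEulerSeries a q (z * q ^ m) := by
    refine qPoch_mul_eq_qPoch_mul_of_forall_lt fun j hj => ?_
    have hsucc := hT (j + 1) hj
    rw [pow_succ, ← mul_assoc] at hsucc
    simpa [hT j hj.le, hsucc] using one_sub_mul_qBinomEulerSeries (a := a) hq (hzj j)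
  have hlast := one_sub_mul_qBinomEulerSeries (a := a) hq (hzj m)
  rw [hT m le_rfl, ← mul_assoc, h] at hlast
  have hqbinom := qPochInf_mul_qBinomSeries (a := a) hq (norm_mul_lt_one hq (hzj m))
  rw [← mul_assoc, ← mul_assoc, h, one_mul] at hqbinom
  have hsplit := qPochInf_eq_qPoch_mul hq z (m + 1)
  rw [qPoch_succ, pow_succ, ← mul_assoc] at hsplit
  rw [hsplit]
  linear_combination (1 - z * q ^ m) * qPochInf (z * q ^ m * q) q * hladder +
    qPoch (a * z) q m * qPochInf (z * q ^ m * q) q * hlast - qPoch (a * z) q m * hqbinom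

theorem stmt5 (q a : ℂ) (hq0 : 0 < ‖q‖) (hq1 : ‖q‖ < 1)
    (m : ℕ) (ha : a ≠ 0) (habs : ‖1 / (a * q ^ m)‖ < 1) :
    ∑' n : ℕ, (n : ℂ) * (qPoch a q n / qPoch q q n) * (1 / (a * q ^ m)) ^ n =
      (-1) ^ (m + 1) * q ^ (-((m * (m + 1) / 2 : ℕ) : ℤ)) * qPoch q q m *
        qPochInf q q / qPochInf (1 / (a * q ^ m)) q := by
  have hqm : q ^ m ≠ 0 := pow_ne_zero m (norm_pos_iff.1 hq0)
  have haz : a * (1 / (a * q ^ m)) = (q ^ m)⁻¹ := by field_simp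
  have key := qPochInf_mul_qBinomEulerSeries hq1 habs (by rw [haz, inv_mul_cancel₀ hqm])
  rw [haz, qPoch_inv_pow_self (norm_pos_iff.1 hq0)] at key
  change qBinomEulerSeries a q _ = _
  rw [zpow_neg, zpow_natCast, eq_div_iff (qPochInf_ne_zero hq1 habs)]
  linear_combination key
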